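/- Let W_∞ = ⟨s, t | s² = t² = 1⟩ be the infinite dihedral group, whose reflections are the elements t(n) = (st)^n s for n ∈ ℤ (the elements of odd length in s, t). Then every triple (r_1, r_2, r_3) of reflections of W_∞ lies in the same Hurwitz orbit as some triple of the form (r, r, r′) whose first two entries are equal. -/

import Mathlib

/-- A single Hurwitz move `σ_i` on tuples in a group. -/
def HurwitzMove {G : Type*} [Group G] {m : ℕ} (t t' : Fin m → G) : Prop :=
  ∃ (i : Fin m) (h : (i : ℕ) + 1 < m),
    t' i = t ⟨(i : ℕ) + 1, h⟩ ∧
      t' ⟨(i : ℕ) + 1, h⟩ = (t ⟨(i : ℕ) + 1, h⟩)⁻¹ * t i * t ⟨(i : ℕ) + 1, h⟩ ∧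
      ∀ j : Fin m, j ≠ i → j ≠ ⟨(i : ℕ) + 1, h⟩ → t' j = t j

/-- Two tuples lie in the same Hurwitz orbit when they are related by a finite sequence of
Hurwitz moves and their inverses. -/
def SameHurwitzOrbit {G : Type*} [Group G] {m : ℕ} (t t' : Fin m → G) : Prop :=
  Relation.EqvGen HurwitzMove t t'

/-- The relations `s² = t² = 1` presenting the infinite dihedral group, on the generator set
`Bool` (with `true ↦ s`, `false ↦ t`). -/
def dihedralRels : Set (FreeGroup Bool) :=
  {FreeGroup.of true * FreeGroup.of true, FreeGroup.of false * FreeGroup.of false}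

/-- The infinite dihedral group `W_∞ = ⟨s, t ∣ s² = t² = 1⟩`. -/
abbrev Dinf : Type := PresentedGroup dihedralRels

/-- The reflections of `W_∞`: the elements `t(n) = (st)^n s`, `n ∈ ℤ`. -/
def DinfReflections : Set Dinf :=
  Set.range fun n : ℤ =>
    (PresentedGroup.of (rels := dihedralRels) true * PresentedGroup.of false) ^ n *
      PresentedGroup.of true

/-!
Writing the reflections as `t(n) = (st)^n s`, a Hurwitz move acts on a triple `(t(a), t(b), t(c))`
by `(a, b, c) ↦ (b, 2b - a, c)` or `(a, b, c) ↦ (a, c, 2c - b)`. On the differences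
`(x, y) = (a - b, b - c)` these are the transvections `(x, y) ↦ (x, y - x)` and `(x, y) ↦ (x + y, y)`,
so a Euclidean algorithm on `(x, y)` reaches `x = 0`, i.e. a triple with equal first two entries.
-/

section HurwitzMove

variable {G : Type*} [Group G]

lemma hurwitzMove_fin_three_zero (x y z : G) :
    HurwitzMove ![x, y, z] ![y, y⁻¹ * x * y, z] := by
  refine ⟨0, by norm_num, rfl, rfl, ?_⟩
  intro j hj0 hj1
  fin_cases j
  · exact absurd rfl hj0
  · exact absurd rfl hj1
  · rfl

lemma hurwitzMove_fin_three_one (x y z : G) :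
    HurwitzMove ![x, y, z] ![x, z, z⁻¹ * y * z] := by
  refine ⟨1, by norm_num, rfl, rfl, ?_⟩
  intro j hj1 hj2
  fin_cases j
  · rfl
  · exact absurd rfl hj1
  · exact absurd rfl hj2

end HurwitzMove

section DihedralReflection

variable {G : Type*} [Group G] {s t : G}

def dihedralReflection (s t : G) (n : ℤ) : G := (s * t) ^ n * s

lemma dihedralReflection_mul_dihedralReflection (hs : s * s = 1) (ht : t * t = 1) (a b : ℤ) :
    dihedralReflection s t a * dihedralReflection s t b = (s * t) ^ (a - b) := by
  have hs' : s⁻¹ = s := inv_eq_of_mul_eq_one_right hs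
  have ht' : t⁻¹ = t := inv_eq_of_mul_eq_one_right ht
  have hconj : s * (s * t) * s⁻¹ = (s * t)⁻¹ := by
    rw [hs', mul_inv_rev, hs', ht', ← mul_assoc, hs, one_mul]
  calc dihedralReflection s t a * dihedralReflection s t b
      = (s * t) ^ a * (s * (s * t) ^ b * s⁻¹) := by
        rw [dihedralReflection, dihedralReflection, hs']; group
    _ = (s * t) ^ (a - b) := by
        rw [← conj_zpow, hconj, inv_zpow', ← zpow_add, sub_eq_add_neg]

lemma dihedralReflection_conj (hs : s * s = 1) (ht : t * t = 1) (a b : ℤ) :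
    (dihedralReflection s t b)⁻¹ * dihedralReflection s t a * dihedralReflection s t b =
      dihedralReflection s t (2 * b - a) := by
  have hinv : (dihedralReflection s t b)⁻¹ = dihedralReflection s t b := by
    apply inv_eq_of_mul_eq_one_right
    rw [dihedralReflection_mul_dihedralReflection hs ht, sub_self, zpow_zero]
  rw [hinv, dihedralReflection_mul_dihedralReflection hs ht, dihedralReflection, dihedralReflection,
    ← mul_assoc, ← zpow_add]
  congr 2
  ring

end DihedralReflection

section ReflectionFamily

variable {G : Type*} [Group G] {f : ℤ → G}

lemma sameHurwitzOrbit_fin_three_zero (hf : ∀ a b, (f b)⁻¹ * f a * f b = f (2 * b - a))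
    {a b c d : ℤ} (h : a + d = 2 * b) :
    SameHurwitzOrbit ![f a, f b, f c] ![f b, f d, f c] := by
  have hd : f d = (f b)⁻¹ * f a * f b := by rw [hf, show 2 * b - a = d by omega]
  rw [hd]
  exact .rel _ _ (hurwitzMove_fin_three_zero _ _ _)

lemma sameHurwitzOrbit_fin_three_one (hf : ∀ a b, (f b)⁻¹ * f a * f b = f (2 * b - a))
    {a b c d : ℤ} (h : b + d = 2 * c) :
    SameHurwitzOrbit ![f a, f b, f c] ![f a, f c, f d] := by
  have hd : f d = (f c)⁻¹ * f b * f c := by rw [hf, show 2 * c - b = d by omega]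
  rw [hd]
  exact .rel _ _ (hurwitzMove_fin_three_one _ _ _)

/-- Induction on `|a - b| + |b - c|`: while both differences are nonzero, one of the two moves or
their inverses decreases it. -/
theorem exists_sameHurwitzOrbit_first_two_eq (hf : ∀ a b, (f b)⁻¹ * f a * f b = f (2 * b - a))
    (a b c : ℤ) : ∃ a' c', SameHurwitzOrbit ![f a, f b, f c] ![f a', f a', f c'] := by
  induction hn : (a - b).natAbs + (b - c).natAbs using Nat.strong_induction_on
    generalizing a b c with
  | _ n ih =>
  have descend : ∀ a₁ b₁ c₁, SameHurwitzOrbit ![f a, f b, f c] ![f a₁, f b₁, f c₁] →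
      (a₁ - b₁).natAbs + (b₁ - c₁).natAbs < n →
      ∃ a' c', SameHurwitzOrbit ![f a, f b, f c] ![f a', f a', f c'] := by
    intro a₁ b₁ c₁ hmove hlt
    obtain ⟨a', c', horb⟩ := ih _ hlt a₁ b₁ c₁ rfl
    exact ⟨a', c', .trans _ _ _ hmove horb⟩
  by_cases hab : a = b
  · subst hab
    exact ⟨a, c, .refl _⟩
  by_cases hbc : b = c
  · subst hbc
    exact ⟨b, a, .trans _ _ _ (sameHurwitzOrbit_fin_three_zero hf (d := 2 * b - a) (by ring))
      (sameHurwitzOrbit_fin_three_one hf (by ring))⟩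
  rcases (by omega : (a - b).natAbs + (2 * b - a - c).natAbs < n ∨
      (a - b).natAbs + (a - c).natAbs < n ∨ (a - c).natAbs + (b - c).natAbs < n ∨
      (a - 2 * b + c).natAbs + (b - c).natAbs < n) with h | h | h | h
  · exact descend b (2 * b - a) c (sameHurwitzOrbit_fin_three_zero hf (by ring)) (by omega)
  · exact descend (2 * a - b) a c
      (.symm _ _ (sameHurwitzOrbit_fin_three_zero hf (by ring))) (by omega)
  · exact descend a c (2 * c - b) (sameHurwitzOrbit_fin_three_one hf (by ring)) (by omega)
  · exact descend a (2 * b - c) b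
      (.symm _ _ (sameHurwitzOrbit_fin_three_one hf (by ring))) (by omega)

end ReflectionFamily

lemma dihedralRels_of_mul_self (x : Bool) :
    PresentedGroup.of (rels := dihedralRels) x * PresentedGroup.of x = 1 := by
  rw [PresentedGroup.of, ← map_mul]
  apply PresentedGroup.one_of_mem
  cases x <;> simp [dihedralRels]

/-- Every triple of reflections of the infinite dihedral group lies in the Hurwitz orbit of a
triple whose first two entries are equal. -/
theorem stmt17 (r : Fin 3 → Dinf) (hr : ∀ i, r i ∈ DinfReflections) :
    ∃ r' : Fin 3 → Dinf,
      SameHurwitzOrbit r r' ∧ (∀ i, r' i ∈ DinfReflections) ∧ r' 0 = r' 1 := by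
  choose n hn using hr
  obtain ⟨a, c, horb⟩ := exists_sameHurwitzOrbit_first_two_eq
    (dihedralReflection_conj (dihedralRels_of_mul_self true) (dihedralRels_of_mul_self false))
    (n 0) (n 1) (n 2)
  have hr : r = ![r 0, r 1, r 2] := by
    funext i
    fin_cases i <;> rfl
  rw [hr, ← hn 0, ← hn 1, ← hn 2]
  exact ⟨_, horb, fun i => by fin_cases i <;> exact ⟨_, rfl⟩, rfl⟩
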